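/- arXiv:2602.17545 — 4 statements merged into one kernel-verified Lean document; each statement's English description precedes it below -/
import Mathlib

section
/- Let η ∈ (0,1) and let {αₖ}ₖ≥₋₁ be a sequence of positive reals with αₖ ≥ α̲ > 0 for all k, and let {nₖ}ₖ≥₀ be a summable sequence of nonnegative reals satisfying (αₖ)² ≤ (αₖ₋₁)² + nₖ whenever αₖ ≥ αₖ₋₁, and (αₖ)² ≤ η²((αₖ₋₁)² + nₖ) whenever αₖ < αₖ₋₁. Then the set of indices k with αₖ < αₖ₋₁ is finite, the sequence {αₖ} is eventually nondecreasing, bounded above, and converges to a limit α ≥ α̲. -/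
/-- A backtracking stepsize sequence (here `α 0` plays the role of `α₋₁`
and `α (k+1)` is the stepsize `αₖ`) that is bounded below by `αlow > 0`, increases
by at most a summable budget `n k` per step, and contracts by factor `η < 1` at each
decrease event, has finitely many decrease events, is eventually nondecreasing,
bounded above, and converges to a limit `l ≥ αlow`. -/
theorem stmt0 (η αlow : ℝ) (hη0 : 0 < η) (hη1 : η < 1)
    (α : ℕ → ℝ) (n : ℕ → ℝ)
    (hαlow : 0 < αlow) (hα : ∀ k, αlow ≤ α k)
    (hn : ∀ k, 0 ≤ n k) (hsum : Summable n)
    (hinc : ∀ k, α k ≤ α (k + 1) → (α (k + 1)) ^ 2 ≤ (α k) ^ 2 + n k)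
    (hdec : ∀ k, α (k + 1) < α k → (α (k + 1)) ^ 2 ≤ η ^ 2 * ((α k) ^ 2 + n k)) :
    {k : ℕ | α (k + 1) < α k}.Finite ∧
    (∃ N : ℕ, ∀ k, N ≤ k → α k ≤ α (k + 1)) ∧
    (∃ C : ℝ, ∀ k, α k ≤ C) ∧
    ∃ l : ℝ, αlow ≤ l ∧ Filter.Tendsto α Filter.atTop (nhds l) := by
  have hη2 : η ^ 2 ≤ 1 := by nlinarith
  have hη2' : (0:ℝ) ≤ η ^ 2 := by positivity
  have hαpos : ∀ k, 0 < α k := fun k => lt_of_lt_of_le hαlow (hα k)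
  -- step bound
  have hstep : ∀ k, α (k + 1) ^ 2 ≤ α k ^ 2 + n k := by
    intro k
    rcases lt_or_ge (α (k + 1)) (α k) with h | h
    · have h1 := hdec k h
      nlinarith [hn k, sq_nonneg (α k)]
    · exact hinc k h
  -- key inductive bound
  have key : ∀ N k, N ≤ k →
      α k ^ 2 ≤ η ^ (2 * ((Finset.Ico N k).filter (fun j => α (j+1) < α j)).card) * α N ^ 2
        + ∑ j ∈ Finset.Ico N k, n j := by
    intro N
    refine Nat.le_induction ?_ ?_
    · simp
    · intro k hk IH
      have hIco : Finset.Ico N (k+1) = insert k (Finset.Ico N k) := by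
        ext x; simp only [Finset.mem_Ico, Finset.mem_insert]; omega
      have hknot : k ∉ Finset.Ico N k := by simp
      have hsum' : ∑ j ∈ Finset.Ico N (k+1), n j = (∑ j ∈ Finset.Ico N k, n j) + n k := by
        rw [hIco, Finset.sum_insert hknot]; ring
      set D := ((Finset.Ico N k).filter (fun j => α (j+1) < α j)).card with hD
      have hSnn : 0 ≤ ∑ j ∈ Finset.Ico N k, n j :=
        Finset.sum_nonneg fun j _ => hn j
      have hpow1 : η ^ (2 * D) ≤ 1 := pow_le_one₀ hη0.le hη1.le
      rcases lt_or_ge (α (k + 1)) (α k) with h | h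
      · have hcard : ((Finset.Ico N (k+1)).filter (fun j => α (j+1) < α j)).card = D + 1 := by
          rw [hIco, Finset.filter_insert, if_pos h,
            Finset.card_insert_of_notMem (fun hc => hknot (Finset.mem_of_mem_filter _ hc))]
        rw [hcard, hsum']
        have h1 := hdec k h
        have : η ^ 2 * (α k ^ 2 + n k) ≤
            η ^ 2 * ((η ^ (2 * D) * α N ^ 2 + ∑ j ∈ Finset.Ico N k, n j) + n k) := by
          apply mul_le_mul_of_nonneg_left _ hη2'
          linarith
        have hpe : η ^ (2 * (D + 1)) = η ^ 2 * η ^ (2 * D) := by ring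
        rw [hpe]
        nlinarith [sq_nonneg (α N), hn k]
      · have hcard : ((Finset.Ico N (k+1)).filter (fun j => α (j+1) < α j)).card = D := by
          rw [hIco, Finset.filter_insert, if_neg (not_lt.mpr h)]
        rw [hcard, hsum']
        have h1 := hinc k h
        linarith
  -- finiteness of decrease set
  have hfin : {k : ℕ | α (k + 1) < α k}.Finite := by
    by_contra hinf
    have hhalf : (0:ℝ) < αlow ^ 2 / 2 := by positivity
    -- choose N with small tail
    obtain ⟨N, hN⟩ : ∃ N, ∑' i, n (i + N) < αlow ^ 2 / 2 := by
      have h0 := tendsto_sum_nat_add n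
      exact ((h0.eventually_lt_const hhalf).exists)
    -- choose M with small power
    obtain ⟨M, hM⟩ : ∃ M, (η ^ 2) ^ M * α N ^ 2 < αlow ^ 2 / 2 := by
      have h0 : Filter.Tendsto (fun m => (η ^ 2) ^ m * α N ^ 2) Filter.atTop (nhds (0 * α N ^ 2)) :=
        (tendsto_pow_atTop_nhds_zero_of_lt_one hη2' (by nlinarith)).mul_const _
      rw [zero_mul] at h0
      exact (h0.eventually_lt_const hhalf).exists
    -- pick M decrease events past N
    have hinf2 : {k : ℕ | α (k + 1) < α k}.Infinite := hinf
    have hinf' : ({k : ℕ | α (k + 1) < α k} \ Set.Iio N).Infinite :=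
      hinf2.diff (Set.finite_Iio N)
    obtain ⟨t, hts, htc⟩ := hinf'.exists_subset_card_eq M
    set k := max N (t.sup id + 1) with hk
    have hNk : N ≤ k := le_max_left _ _
    have htsub : t ⊆ (Finset.Ico N k).filter (fun j => α (j+1) < α j) := by
      intro j hj
      obtain ⟨hjE, hjN⟩ := hts hj
      simp only [Set.mem_Iio, not_lt] at hjN
      refine Finset.mem_filter.mpr ⟨Finset.mem_Ico.mpr ⟨hjN, ?_⟩, hjE⟩
      calc j ≤ t.sup id := Finset.le_sup (f := id) hj
        _ < t.sup id + 1 := Nat.lt_succ_self _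
        _ ≤ k := le_max_right _ _
    have hDM : M ≤ ((Finset.Ico N k).filter (fun j => α (j+1) < α j)).card := by
      rw [← htc]; exact Finset.card_le_card htsub
    have hkey := key N k hNk
    set D := ((Finset.Ico N k).filter (fun j => α (j+1) < α j)).card with hD
    have hsum_tail : Summable (fun i => n (i + N)) := (summable_nat_add_iff N).mpr hsum
    have hsum_le : ∑ j ∈ Finset.Ico N k, n j ≤ ∑' i, n (i + N) := by
      rw [Finset.sum_Ico_eq_sum_range]
      calc ∑ i ∈ Finset.range (k - N), n (N + i)
          = ∑ i ∈ Finset.range (k - N), n (i + N) := by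
            apply Finset.sum_congr rfl; intro i _; rw [Nat.add_comm]
        _ ≤ ∑' i, n (i + N) := Summable.sum_le_tsum _ (fun i _ => hn _) hsum_tail
    have hpow : η ^ (2 * D) ≤ (η ^ 2) ^ M := by
      rw [pow_mul]
      exact pow_le_pow_of_le_one hη2' hη2 hDM
    have hlow : αlow ^ 2 ≤ α k ^ 2 := by nlinarith [hα k]
    have hpm : η ^ (2 * D) * α N ^ 2 ≤ (η ^ 2) ^ M * α N ^ 2 :=
      mul_le_mul_of_nonneg_right hpow (sq_nonneg _)
    linarith
  -- eventual monotonicity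
  obtain ⟨b, hb⟩ := hfin.bddAbove
  have hmono : ∀ k, b + 1 ≤ k → α k ≤ α (k + 1) := by
    intro k hkb
    by_contra h
    have : k ∈ {k : ℕ | α (k + 1) < α k} := not_le.mp h
    have := hb this
    omega
  -- boundedness
  have hbk : ∀ k, α k ^ 2 ≤ α 0 ^ 2 + ∑' i, n i := by
    intro k
    have h1 : α k ^ 2 ≤ α 0 ^ 2 + ∑ j ∈ Finset.range k, n j := by
      induction k with
      | zero => simp
      | succ k ih =>
        rw [Finset.sum_range_succ]
        have := hstep k
        linarith
    have h2 : ∑ j ∈ Finset.range k, n j ≤ ∑' i, n i :=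
      Summable.sum_le_tsum _ (fun i _ => hn _) hsum
    linarith
  set C := Real.sqrt (α 0 ^ 2 + ∑' i, n i) with hC
  have hbC : ∀ k, α k ≤ C := by
    intro k
    have : α k = Real.sqrt (α k ^ 2) := (Real.sqrt_sq (hαpos k).le).symm
    rw [this]
    exact Real.sqrt_le_sqrt (hbk k)
  -- convergence
  set g : ℕ → ℝ := fun k => α (k + (b + 1)) with hg
  have hgmono : Monotone g := by
    apply monotone_nat_of_le_succ
    intro k
    have h := hmono (k + (b + 1)) (by omega)
    show α (k + (b + 1)) ≤ α (k + 1 + (b + 1))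
    rw [show k + 1 + (b + 1) = k + (b + 1) + 1 from by omega]
    exact h
  have hgbdd : BddAbove (Set.range g) := ⟨C, by rintro x ⟨k, rfl⟩; exact hbC _⟩
  have hgt : Filter.Tendsto g Filter.atTop (nhds (⨆ k, g k)) :=
    tendsto_atTop_ciSup hgmono hgbdd
  refine ⟨hfin, ⟨b + 1, hmono⟩, ⟨C, hbC⟩, ⟨⨆ k, g k, ?_, ?_⟩⟩
  · calc αlow ≤ g 0 := hα _
      _ ≤ ⨆ k, g k := le_ciSup hgbdd 0
  · exact (Filter.tendsto_add_atTop_iff_nat (b + 1)).mp hgt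
end

section
/- For any real numbers a > 0, b ≥ 0 and any x ∈ [0,1), one has max{x, a − b·x/(1−x)} ≥ a/(a+b+1). -/
/-- For `a > 0`, `b ≥ 0` and `x ∈ [0,1)`,
`max{x, a − b·x/(1−x)} ≥ a/(a+b+1)`. -/
theorem stmt1 (a b x : ℝ) (ha : 0 < a) (hb : 0 ≤ b) (hx0 : 0 ≤ x) (hx1 : x < 1) :
    a / (a + b + 1) ≤ max x (a - b * x / (1 - x)) := by
  rcases le_total (a / (a + b + 1)) x with h | h
  · exact le_max_of_le_left h
  · refine le_max_of_le_right ?_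
    have h1x : (0:ℝ) < 1 - x := by linarith
    have hd : (0:ℝ) < a + b + 1 := by linarith
    rw [le_div_iff₀ hd] at h
    rw [div_le_iff₀ hd]
    have hq : 0 ≤ b * x / (1 - x) := div_nonneg (mul_nonneg hb hx0) h1x.le
    have key : b * x / (1 - x) * (1 - x) = b * x := div_mul_cancel₀ _ (ne_of_gt h1x)
    nlinarith [key, hq, mul_nonneg hq hx0, mul_le_mul_of_nonneg_left h hq,
      mul_le_mul_of_nonneg_left h hb]
end

section
/- Let {αₖ}ₖ≥₀ be a sequence of positive reals, η' ∈ (0,1), and define the set of drop times 𝒦ᵏ := { j ∈ {0,…,k} : αⱼ ≤ η'·min_{0≤t≤j−1} αₜ } (with the convention min over the empty range equal to α₋₁ > 0), the reset counter rᵏ := |𝒦ᵏ|, and the time since last reset τᵏ := k − max 𝒦ᵏ (with max ∅ = −1). Fix β > 0 and exponents p > 1, q > 1, and define nᵏ := β / ((rᵏ+1)^q · (τᵏ+1)^p). Then the sequence {nᵏ} is summable; more precisely, ∑ₖ₌₀^∞ nᵏ ≤ β·Sₚ·S_q where Sₚ = ∑_{t=1}^∞ t^{−p} and S_q = ∑_{t=1}^∞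 t^{−q}. -/
open scoped Classical

/-- Running minimum of previous stepsizes: `prevMin a α j = min{α₋₁, α 0, …, α (j−1)}`,
with `a = α₋₁`. -/
noncomputable def prevMin (a : ℝ) (α : ℕ → ℝ) : ℕ → ℝ
  | 0 => a
  | j + 1 => min (prevMin a α j) (α j)

/-- Set of drop times up to `k`: `𝒦ᵏ = {j ≤ k : α j ≤ η'·min_{t<j} α t}`. -/
noncomputable def dropSet (a : ℝ) (α : ℕ → ℝ) (η' : ℝ) (k : ℕ) : Finset ℕ :=
  (Finset.range (k + 1)).filter fun j => α j ≤ η' * prevMin a α j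

/-- Reset counter `rᵏ = |𝒦ᵏ|`. -/
noncomputable def resetCount (a : ℝ) (α : ℕ → ℝ) (η' : ℝ) (k : ℕ) : ℕ :=
  (dropSet a α η' k).card

/-- Time since last reset `τᵏ = k − max 𝒦ᵏ` (with `max ∅ = −1`, so `τᵏ = k + 1` then). -/
noncomputable def timeSinceReset (a : ℝ) (α : ℕ → ℝ) (η' : ℝ) (k : ℕ) : ℕ :=
  if h : (dropSet a α η' k).Nonempty then k - (dropSet a α η' k).max' h else k + 1

lemma dropSet_mono (a : ℝ) (α : ℕ → ℝ) (η' : ℝ) {k k' : ℕ} (h : k ≤ k') :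
    dropSet a α η' k ⊆ dropSet a α η' k' :=
  Finset.filter_subset_filter _ (Finset.range_subset_range.2 (by omega))

lemma aux_ne (a : ℝ) (α : ℕ → ℝ) (η' : ℝ) {k k' : ℕ} (hlt : k < k')
    (hr : resetCount a α η' k = resetCount a α η' k') :
    timeSinceReset a α η' k ≠ timeSinceReset a α η' k' := by
  have hsub := dropSet_mono a α η' (le_of_lt hlt)
  have heq : dropSet a α η' k = dropSet a α η' k' :=
    Finset.eq_of_subset_of_card_le hsub (le_of_eq hr.symm)
  unfold timeSinceReset
  rw [heq]
  by_cases h : (dropSet a α η' k').Nonempty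
  · rw [dif_pos h, dif_pos h]
    have hm : (dropSet a α η' k').max' h ∈ dropSet a α η' k' := Finset.max'_mem _ h
    have hss : dropSet a α η' k' ⊆ Finset.range (k + 1) := by
      rw [← heq]; exact Finset.filter_subset _ _
    have : (dropSet a α η' k').max' h ≤ k := by
      have := Finset.mem_range.1 (hss hm)
      omega
    omega
  · rw [dif_neg h, dif_neg h]
    omega

lemma inj (a : ℝ) (α : ℕ → ℝ) (η' : ℝ) :
    Function.Injective (fun k => (resetCount a α η' k, timeSinceReset a α η' k)) := by
  intro k k' h
  simp only [Prod.mk.injEq] at h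
  rcases lt_trichotomy k k' with hlt | he | hlt
  · exact absurd h.2 (aux_ne a α η' hlt h.1)
  · exact he
  · exact absurd h.2.symm (aux_ne a α η' hlt h.1.symm)

lemma summable_shift (p : ℝ) (hp : 1 < p) :
    Summable (fun t : ℕ => ((t : ℝ) + 1) ^ (-p)) := by
  have h : Summable (fun n : ℕ => (n : ℝ) ^ (-p)) :=
    (Real.summable_nat_rpow).2 (by linarith)
  refine ((summable_nat_add_iff 1).2 h).congr fun t => ?_
  push_cast
  ring_nf

/-- the adaptive budget `nᵏ = β/((rᵏ+1)^q (τᵏ+1)^p)` is summable for any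
positive stepsize sequence, with `∑ nᵏ ≤ β·Sₚ·S_q`. -/
theorem stmt2 (a η' β p q : ℝ) (α : ℕ → ℝ)
    (ha : 0 < a) (hα : ∀ k, 0 < α k) (hη'0 : 0 < η') (hη'1 : η' < 1)
    (hβ : 0 < β) (hp : 1 < p) (hq : 1 < q) :
    Summable (fun k => β / (((resetCount a α η' k : ℝ) + 1) ^ q *
        ((timeSinceReset a α η' k : ℝ) + 1) ^ p)) ∧
    (∑' k : ℕ, β / (((resetCount a α η' k : ℝ) + 1) ^ q *
        ((timeSinceReset a α η' k : ℝ) + 1) ^ p)) ≤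
      β * (∑' t : ℕ, ((t : ℝ) + 1) ^ (-p)) * (∑' t : ℕ, ((t : ℝ) + 1) ^ (-q)) := by
  set u : ℕ → ℝ := fun t => ((t : ℝ) + 1) ^ (-p) with hu_def
  set v : ℕ → ℝ := fun t => ((t : ℝ) + 1) ^ (-q) with hv_def
  have hu : Summable u := summable_shift p hp
  have hv : Summable v := summable_shift q hq
  have hu0 : ∀ t, 0 ≤ u t := fun t => Real.rpow_nonneg (by positivity) _
  have hv0 : ∀ t, 0 ≤ v t := fun t => Real.rpow_nonneg (by positivity) _
  set n : ℕ → ℝ := fun k => β / (((resetCount a α η' k : ℝ) + 1) ^ q *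
      ((timeSinceReset a α η' k : ℝ) + 1) ^ p) with hn_def
  have hn_eq : ∀ k, n k = β * (v (resetCount a α η' k) * u (timeSinceReset a α η' k)) := by
    intro k
    simp only [hn_def, hu_def, hv_def]
    rw [Real.rpow_neg (by positivity), Real.rpow_neg (by positivity), div_eq_mul_inv, mul_inv]
  have hn0 : ∀ k, 0 ≤ n k := by
    intro k
    rw [hn_eq]
    have := hu0 (timeSinceReset a α η' k)
    have := hv0 (resetCount a α η' k)
    positivity
  have key : ∀ N, ∑ k ∈ Finset.range N, n k ≤ β * (∑' t : ℕ, u t) * (∑' t : ℕ, v t) := by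
    intro N
    have h1 : ∑ k ∈ Finset.range N, n k =
        β * ∑ x ∈ (Finset.range N).image
          (fun k => (resetCount a α η' k, timeSinceReset a α η' k)),
          (v x.1 * u x.2) := by
      rw [Finset.sum_image (fun x _ y _ h => inj a α η' h), Finset.mul_sum]
      exact Finset.sum_congr rfl fun k _ => hn_eq k
    have hsubset : (Finset.range N).image
        (fun k => (resetCount a α η' k, timeSinceReset a α η' k)) ⊆
        Finset.range (N + 2) ×ˢ Finset.range (N + 2) := by
      intro x hx
      rcases Finset.mem_image.1 hx with ⟨k, hk, rfl⟩
      have hk' : k < N := Finset.mem_range.1 hk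
      have hr : resetCount a α η' k ≤ k + 1 := by
        calc resetCount a α η' k ≤ (Finset.range (k+1)).card :=
              Finset.card_le_card (Finset.filter_subset _ _)
          _ = k + 1 := Finset.card_range _
      have hτ : timeSinceReset a α η' k ≤ k + 1 := by
        unfold timeSinceReset
        split <;> omega
      simp only [Finset.mem_product, Finset.mem_range]
      omega
    have h2 : ∑ x ∈ (Finset.range N).image
          (fun k => (resetCount a α η' k, timeSinceReset a α η' k)),
          (v x.1 * u x.2) ≤
        ∑ x ∈ Finset.range (N + 2) ×ˢ Finset.range (N + 2), (v x.1 * u x.2) :=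
      Finset.sum_le_sum_of_subset_of_nonneg hsubset
        (fun x _ _ => mul_nonneg (hv0 _) (hu0 _))
    have h3 : ∑ x ∈ Finset.range (N + 2) ×ˢ Finset.range (N + 2), (v x.1 * u x.2) =
        (∑ i ∈ Finset.range (N + 2), v i) * (∑ j ∈ Finset.range (N + 2), u j) := by
      rw [Finset.sum_product, ← Finset.sum_mul_sum]
    have h4 : (∑ i ∈ Finset.range (N + 2), v i) ≤ ∑' t, v t :=
      Summable.sum_le_tsum _ (fun t _ => hv0 t) hv
    have h5 : (∑ j ∈ Finset.range (N + 2), u j) ≤ ∑' t, u t :=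
      Summable.sum_le_tsum _ (fun t _ => hu0 t) hu
    calc ∑ k ∈ Finset.range N, n k
        = β * ∑ x ∈ (Finset.range N).image
            (fun k => (resetCount a α η' k, timeSinceReset a α η' k)),
            (v x.1 * u x.2) := h1
      _ ≤ β * ((∑ i ∈ Finset.range (N + 2), v i) * (∑ j ∈ Finset.range (N + 2), u j)) := by
          rw [← h3]; exact mul_le_mul_of_nonneg_left h2 hβ.le
      _ ≤ β * ((∑' t, v t) * (∑' t, u t)) := by
          apply mul_le_mul_of_nonneg_left _ hβ.le
          exact mul_le_mul h4 h5 (Finset.sum_nonneg fun t _ => hu0 t)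
            (tsum_nonneg hv0)
      _ = β * (∑' t : ℕ, u t) * (∑' t : ℕ, v t) := by ring
  have hsum : Summable n := summable_of_sum_range_le hn0 key
  exact ⟨hsum, Summable.tsum_le_of_sum_range_le hsum key⟩
end

section
/- Let {mᵏ}ₖ≥₀ be summable nonnegative reals, η ∈ (0,1), and α̲ > 0. Suppose a sequence {αᵏ}ₖ≥₋₁ of positive reals satisfies αᵏ ≥ α̲ for all k, and there is an infinite set D ⊆ ℕ of 'decrease times' such that for each k ∈ D, (αᵏ)² ≤ η²((αᵏ⁻¹)² + mᵏ), while for all k, (αᵏ)² ≤ (αᵏ⁻¹)² + mᵏ. If furthermore there exists K with ∑_{t≥K} mᵗ < ((1−η²)/2)·α̲², then D ∩ [K, ∞) induces a strict contraction: for every k ∈ D with k ≥ K and every k' ≥ k, (α^{k'})² ≤ ((1+η²)/2)·(α^{k−1})². Consequently D is finite, contradicting the assumption; hence no such sequence has infinitely many decrease times. -/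
/-!
After a decrease time `k ≥ K` the squared stepsize is at most `η²·(α^{k-1})²` plus the increase
budget spent since `k`, which is smaller than the tail `∑_{t ≥ K} mᵗ < ((1 - η²)/2)·α̲²
≤ ((1 - η²)/2)·(α^{k-1})²`; hence every later squared stepsize is at most `(1 + η²)/2` times
`(α^{k-1})²`. Chaining infinitely many such decrease times would make the squared stepsizes decay
geometrically, below `α̲²`.
-/

open Finset

lemma le_add_sum_Ico_of_le_add {a m : ℕ → ℝ} (h : ∀ n, a (n + 1) ≤ a n + m n) {i j : ℕ}
    (hij : i ≤ j) : a j ≤ a i + ∑ t ∈ Ico i j, m t := by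
  induction j, hij using Nat.le_induction with
  | base => simp
  | succ j hij ih =>
    rw [sum_Ico_succ_top hij]
    linarith [h j]

lemma sum_Ico_le_tsum_nat_add {m : ℕ → ℝ} (hm : ∀ n, 0 ≤ m n) (hsum : Summable m) {K i : ℕ}
    (hKi : K ≤ i) (j : ℕ) : ∑ t ∈ Ico i j, m t ≤ ∑' t, m (K + t) :=
  calc ∑ t ∈ Ico i j, m t
      ≤ ∑ t ∈ Ico K j, m t :=
        sum_le_sum_of_subset_of_nonneg (Ico_subset_Ico_left hKi) fun n _ _ => hm n
    _ = ∑ t ∈ range (j - K), m (K + t) := sum_Ico_eq_sum_range m K j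
    _ ≤ ∑' t, m (K + t) :=
        (hsum.comp_injective (add_right_injective K)).sum_le_tsum _ fun n _ => hm (K + n)

lemma le_mul_of_decrease_of_tsum_lt {a m : ℕ → ℝ} {r b : ℝ} {K k k' : ℕ}
    (hm : ∀ n, 0 ≤ m n) (hsum : Summable m) (hinc : ∀ n, a (n + 1) ≤ a n + m n)
    (hdec : a (k + 1) ≤ r * (a k + m k)) (hr : r ≤ 1) (hb : b ≤ a k)
    (htail : ∑' t, m (K + t) < (1 - r) / 2 * b) (hKk : K ≤ k) (hkk' : k ≤ k') :
    a (k' + 1) ≤ (1 + r) / 2 * a k := by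
  have hspent : a (k' + 1) ≤ r * a k + ∑ t ∈ Ico k (k' + 1), m t := by
    have hacc := le_add_sum_Ico_of_le_add hinc (Nat.succ_le_succ hkk')
    rw [sum_eq_sum_Ico_succ_bot (Nat.lt_succ_of_le hkk')]
    linarith [mul_le_mul_of_nonneg_right hr (hm k)]
  have hbudget := sum_Ico_le_tsum_nat_add hm hsum hKk (k' + 1)
  have hslack : (1 - r) / 2 * b ≤ (1 - r) / 2 * a k := by gcongr
  linarith

lemma Set.finite_of_forall_lt_imp_le_mul {a : ℕ → ℝ} {b c : ℝ} {S : Set ℕ} (hb : 0 < b)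
    (hab : ∀ n, b ≤ a n) (hc₀ : 0 ≤ c) (hc₁ : c < 1)
    (h : ∀ k ∈ S, ∀ j, k < j → a j ≤ c * a k) : S.Finite := by
  by_contra hS
  set f := Nat.nth (· ∈ S)
  have hf : StrictMono f := Nat.nth_strictMono hS
  have hgeo (n : ℕ) : a (f n) ≤ c ^ n * a (f 0) :=
    le_geom (u := a ∘ f) hc₀ n fun k _ => h _ (Nat.nth_mem_of_infinite hS k) _ (hf k.lt_succ_self)
  have ha₀ : 0 < a (f 0) := hb.trans_le (hab _)
  obtain ⟨n, hn⟩ := exists_pow_lt_of_lt_one (div_pos hb ha₀) hc₁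
  rw [lt_div_iff₀ ha₀] at hn
  linarith [hab (f n), hgeo n]

-- `α (k + 1)` is the paper's `αᵏ`, so `α k` is `αᵏ⁻¹`; `msq k` is `mᵏ`.
theorem stmt10_general (η αlow : ℝ) (hη0 : 0 < η) (hη1 : η < 1) (hαlow : 0 < αlow)
    (α : ℕ → ℝ) (msq : ℕ → ℝ)
    (hα : ∀ k, αlow ≤ α k)
    (hm : ∀ k, 0 ≤ msq k) (hsum : Summable msq)
    (hinc : ∀ k, (α (k + 1)) ^ 2 ≤ (α k) ^ 2 + msq k)
    (D : Set ℕ)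
    (hdec : ∀ k ∈ D, (α (k + 1)) ^ 2 ≤ η ^ 2 * ((α k) ^ 2 + msq k))
    (K : ℕ) (htail : (∑' t : ℕ, msq (K + t)) < (1 - η ^ 2) / 2 * αlow ^ 2) :
    (∀ k ∈ D, K ≤ k → ∀ k', k ≤ k' →
      (α (k' + 1)) ^ 2 ≤ (1 + η ^ 2) / 2 * (α k) ^ 2) ∧
    D.Finite := by
  have hη2 : η ^ 2 < 1 := by nlinarith
  have hαsq (k : ℕ) : αlow ^ 2 ≤ α k ^ 2 := pow_le_pow_left₀ hαlow.le (hα k) 2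
  have hcontr : ∀ k ∈ D, K ≤ k → ∀ k', k ≤ k' → α (k' + 1) ^ 2 ≤ (1 + η ^ 2) / 2 * α k ^ 2 :=
    fun k hk hKk _ hkk' => le_mul_of_decrease_of_tsum_lt (a := fun n => α n ^ 2) hm hsum hinc
      (hdec k hk) hη2.le (hαsq k) htail hKk hkk'
  refine ⟨hcontr, ?_⟩
  have hlate : {k | k ∈ D ∧ K ≤ k}.Finite := by
    refine Set.finite_of_forall_lt_imp_le_mul (a := fun n => α n ^ 2) (c := (1 + η ^ 2) / 2)
      (pow_pos hαlow 2) hαsq (by positivity) (by linarith) fun k ⟨hk, hKk⟩ j hkj => ?_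
    obtain ⟨k', rfl⟩ := Nat.exists_eq_add_of_lt hkj
    exact hcontr k hk hKk (k + k') (Nat.le_add_right k k')
  refine (hlate.union (Set.finite_Iio K)).subset fun k hk => ?_
  rcases le_or_gt K k with hKk | hkK
  · exact Or.inl ⟨hk, hKk⟩
  · exact Or.inr hkK

/-- core contradiction argument of the finite-time min-consensus proof.
Here `α (k+1)` plays the role of `αᵏ` (so `α k` is `αᵏ⁻¹`). If stepsizes are bounded
below by `αlow > 0`, increase by at most a summable budget `m k`, and `D` is the set of
decrease times (each contracting by `η² < 1`), then whenever the tail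
`∑_{t ≥ K} m t < ((1−η²)/2)·αlow²`, every drop at `k ∈ D` with `k ≥ K` forces
`(α^{k'})² ≤ ((1+η²)/2)(α^{k−1})²` for all `k' ≥ k`; consequently `D` is finite. -/
theorem stmt10 (η αlow : ℝ) (hη0 : 0 < η) (hη1 : η < 1) (hαlow : 0 < αlow)
    (α : ℕ → ℝ) (msq : ℕ → ℝ)
    (hαpos : ∀ k, 0 < α k) (hα : ∀ k, αlow ≤ α k)
    (hm : ∀ k, 0 ≤ msq k) (hsum : Summable msq)
    (hinc : ∀ k, (α (k + 1)) ^ 2 ≤ (α k) ^ 2 + msq k)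
    (D : Set ℕ)
    (hdec : ∀ k ∈ D, (α (k + 1)) ^ 2 ≤ η ^ 2 * ((α k) ^ 2 + msq k))
    (K : ℕ) (htail : (∑' t : ℕ, msq (K + t)) < (1 - η ^ 2) / 2 * αlow ^ 2) :
    (∀ k ∈ D, K ≤ k → ∀ k', k ≤ k' →
      (α (k' + 1)) ^ 2 ≤ (1 + η ^ 2) / 2 * (α k) ^ 2) ∧
    D.Finite :=
  stmt10_general η αlow hη0 hη1 hαlow α msq hα hm hsum hinc D hdec K htail
end
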